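/- arXiv:1509.09161 — 3 statements merged into one kernel-verified Lean document; each statement's English description precedes it below -/
import Mathlib

section
/- For the generalized Lorenz system with b = 1, the function W(x,y,z) = y² + z² − 2rz satisfies Ẇ = −2(y² + z² − 2rz) − 2rz along trajectories; hence on the set {z ≥ 0}, Ẇ ≤ −2W, and hence the set Ω = {(x,y,z) : y² + z² ≤ 2rz} is positively invariant. -/
/-!
Along trajectories `Ẇ = -2W - 2rz = -W - (y² + z²) ≤ -W`, so `W(t) e^t` is antitone; since
`W ≤ 0` exactly on `Ω`, a trajectory starting in `Ω` stays there for all `t ≥ 0`.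
-/

open Real

theorem nonpos_of_hasDerivAt_le_neg_mul {f f' : ℝ → ℝ} (c : ℝ)
    (hf : ∀ t, HasDerivAt f (f' t) t) (hle : ∀ t, f' t ≤ -c * f t) (h0 : f 0 ≤ 0)
    {t : ℝ} (ht : 0 ≤ t) : f t ≤ 0 := by
  have hg : ∀ s, HasDerivAt (fun s => f s * exp (c * s)) ((f' s + c * f s) * exp (c * s)) s := by
    intro s
    have hexp : HasDerivAt (fun s => exp (c * s)) (exp (c * s) * c) s := by
      simpa using ((hasDerivAt_id' s).const_mul c).exp
    exact ((hf s).mul hexp).congr_deriv (by ring)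
  have hanti : Antitone fun s => f s * exp (c * s) := by
    refine antitone_of_deriv_nonpos (fun s => (hg s).differentiableAt) fun s => ?_
    rw [(hg s).deriv]
    exact mul_nonpos_of_nonpos_of_nonneg (by linarith [hle s]) (exp_pos _).le
  have hdecay : f t * exp (c * t) ≤ f 0 * exp (c * 0) := hanti ht
  rw [mul_zero, exp_zero, mul_one] at hdecay
  exact nonpos_of_mul_nonpos_left (hdecay.trans h0) (exp_pos _)

section Lyapunov

variable (r x y z : ℝ)

theorem lorenz_lyapunov_deriv_eq :
    2 * y * (r * x - y - x * z) + (2 * z - 2 * r) * (-z + x * y) =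
      -2 * (y ^ 2 + z ^ 2 - 2 * r * z) - 2 * r * z := by
  ring

theorem lorenz_lyapunov_deriv_le_neg_self :
    2 * y * (r * x - y - x * z) + (2 * z - 2 * r) * (-z + x * y) ≤
      -(y ^ 2 + z ^ 2 - 2 * r * z) := by
  nlinarith [lorenz_lyapunov_deriv_eq r x y z, sq_nonneg y, sq_nonneg z]

variable {r z}

theorem lorenz_lyapunov_deriv_le_neg_two_mul (hr : 0 ≤ r) (hz : 0 ≤ z) :
    2 * y * (r * x - y - x * z) + (2 * z - 2 * r) * (-z + x * y) ≤
      -2 * (y ^ 2 + z ^ 2 - 2 * r * z) := by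
  nlinarith [lorenz_lyapunov_deriv_eq r x y z, mul_nonneg hr hz]

end Lyapunov

theorem hasDerivAt_lorenz_lyapunov {r : ℝ} {x y z : ℝ → ℝ} {t : ℝ}
    (hy : HasDerivAt y (r * x t - y t - x t * z t) t)
    (hz : HasDerivAt z (-z t + x t * y t) t) :
    HasDerivAt (fun s => y s ^ 2 + z s ^ 2 - 2 * r * z s)
      (2 * y t * (r * x t - y t - x t * z t) + (2 * z t - 2 * r) * (-z t + x t * y t)) t := by
  refine (((hy.pow 2).add (hz.pow 2)).sub (hz.const_mul (2 * r))).congr_deriv ?_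
  ring

theorem gd_omega_positively_invariant_general
    (σ r A : ℝ) (hr : 0 < r) :
    (∀ x y z : ℝ,
      2 * y * (r * x - y - x * z) + (2 * z - 2 * r) * (-z + x * y) =
        -2 * (y ^ 2 + z ^ 2 - 2 * r * z) - 2 * r * z) ∧
    (∀ x y z : ℝ, 0 ≤ z →
      2 * y * (r * x - y - x * z) + (2 * z - 2 * r) * (-z + x * y) ≤
        -2 * (y ^ 2 + z ^ 2 - 2 * r * z)) ∧
    (∀ x y z : ℝ → ℝ,
      (∀ t, HasDerivAt x (-σ * x t + σ * y t - A * y t * z t) t) →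
      (∀ t, HasDerivAt y (r * x t - y t - x t * z t) t) →
      (∀ t, HasDerivAt z (-z t + x t * y t) t) →
      y 0 ^ 2 + z 0 ^ 2 ≤ 2 * r * z 0 →
      ∀ t ≥ (0:ℝ), y t ^ 2 + z t ^ 2 ≤ 2 * r * z t) := by
  refine ⟨lorenz_lyapunov_deriv_eq r, fun x y _ hz =>
    lorenz_lyapunov_deriv_le_neg_two_mul x y hr.le hz, ?_⟩
  intro x y z _ hy hz h0 t ht
  have hW := nonpos_of_hasDerivAt_le_neg_mul 1
    (fun s => hasDerivAt_lorenz_lyapunov (hy s) (hz s))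
    (fun s => by simpa using lorenz_lyapunov_deriv_le_neg_self r (x s) (y s) (z s))
    (by linarith) ht
  linarith

/-- For the generalized Lorenz system with b = 1, W = y² + z² − 2rz satisfies
Ẇ = −2W − 2rz along trajectories, hence Ẇ ≤ −2W on {z ≥ 0}, and the set
Ω = {y² + z² ≤ 2rz} is positively invariant. -/
theorem gd_omega_positively_invariant
    (σ r A : ℝ) (hσ : 0 < σ) (hr : 0 < r) (hA : 0 < A) :
    (∀ x y z : ℝ,
      2 * y * (r * x - y - x * z) + (2 * z - 2 * r) * (-z + x * y) =
        -2 * (y ^ 2 + z ^ 2 - 2 * r * z) - 2 * r * z) ∧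
    (∀ x y z : ℝ, 0 ≤ z →
      2 * y * (r * x - y - x * z) + (2 * z - 2 * r) * (-z + x * y) ≤
        -2 * (y ^ 2 + z ^ 2 - 2 * r * z)) ∧
    (∀ x y z : ℝ → ℝ,
      (∀ t, HasDerivAt x (-σ * x t + σ * y t - A * y t * z t) t) →
      (∀ t, HasDerivAt y (r * x t - y t - x t * z t) t) →
      (∀ t, HasDerivAt z (-z t + x t * y t) t) →
      y 0 ^ 2 + z 0 ^ 2 ≤ 2 * r * z 0 →
      ∀ t ≥ (0:ℝ), y t ^ 2 + z t ^ 2 ≤ 2 * r * z t) :=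
  gd_omega_positively_invariant_general σ r A hr
end

section
/- If r > 1 and σ, A, b > 0, then with ξ = (σb/(2A²))(A(r−2) − σ + √((Ar−σ)² + 4Aσ)), the points S₁,₂ = (±σb√ξ/(σb+Aξ), ±√ξ, σξ/(σb+Aξ)) are equilibria of the generalized Lorenz system; in particular ξ > 0. -/
/-!
Completing the square, `(Ar - σ)² + 4Aσ = c² + 4A²(r - 1)` with `c = A(r - 2) - σ`, so for
`r > 1` the square root exceeds `|c|` and `ξ > 0`. By the quadratic formula `ξ` is then a root of
`A²ξ² = σbcξ + σ²b²(r - 1)`, and this is exactly the condition for the second equation of the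
system at the points with `y² = ξ`, `x = σby/(σb + Aξ)`, `z = σξ/(σb + Aξ)`; the first and third
equations hold there identically.
-/

lemma add_sqrt_sq_add_pos (c : ℝ) {d : ℝ} (hd : 0 < d) : 0 < c + √(c ^ 2 + d) := by
  have : |c| < √(c ^ 2 + d) := by
    rw [← Real.sqrt_sq_eq_abs]
    exact Real.sqrt_lt_sqrt (sq_nonneg c) (lt_add_of_pos_right _ hd)
  linarith [neg_abs_le c]

lemma sq_mul_sq_eq_of_eq_quadratic_root {A k c e ξ : ℝ} (hA : A ≠ 0)
    (he : 0 ≤ c ^ 2 + 4 * A ^ 2 * e)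
    (hξ : ξ = k / (2 * A ^ 2) * (c + √(c ^ 2 + 4 * A ^ 2 * e))) :
    A ^ 2 * ξ ^ 2 = k * c * ξ + k ^ 2 * e := by
  have hdiscrim : discrim (A ^ 2) (-(k * c)) (-(k ^ 2 * e)) =
      (k * √(c ^ 2 + 4 * A ^ 2 * e)) * (k * √(c ^ 2 + 4 * A ^ 2 * e)) := by
    rw [discrim, mul_mul_mul_comm, Real.mul_self_sqrt he]
    ring
  have hroot := (quadratic_eq_zero_iff (pow_ne_zero 2 hA) hdiscrim ξ).2 <| Or.inl <| by
    rw [hξ]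
    ring
  linear_combination hroot

lemma lorenz_equilibrium_of_sq_eq {σ r A b ξ x y z : ℝ} (hD : σ * b + A * ξ ≠ 0)
    (hquad : A ^ 2 * ξ ^ 2 = σ * b * (A * (r - 2) - σ) * ξ + (σ * b) ^ 2 * (r - 1))
    (hy : y ^ 2 = ξ) (hx : x = σ * b * y / (σ * b + A * ξ)) (hz : z = σ * ξ / (σ * b + A * ξ)) :
    -σ * x + σ * y - A * y * z = 0 ∧ r * x - y - x * z = 0 ∧ -b * z + x * y = 0 := by
  subst hx hz
  refine ⟨?_, ?_, by linear_combination σ * b / (σ * b + A * ξ) * hy⟩ <;> field_simp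
  · ring
  · linear_combination -y * hquad

/-- For r > 1, the points S₁,₂ = (±σb√ξ/(σb+Aξ), ±√ξ, σξ/(σb+Aξ)) with
ξ = (σb/(2A²))(A(r−2) − σ + √((Ar−σ)² + 4Aσ)) are equilibria of the
generalized Lorenz system; in particular ξ > 0. -/
theorem gd_nontrivial_equilibria
    (σ r A b : ℝ) (hσ : 0 < σ) (hA : 0 < A) (hb : 0 < b) (hr : 1 < r)
    (ξ x₁ y₁ z₁ : ℝ)
    (hξ : ξ = (σ * b / (2 * A ^ 2)) *
      (A * (r - 2) - σ + Real.sqrt ((A * r - σ) ^ 2 + 4 * A * σ)))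
    (hx₁ : x₁ = σ * b * Real.sqrt ξ / (σ * b + A * ξ))
    (hy₁ : y₁ = Real.sqrt ξ)
    (hz₁ : z₁ = σ * ξ / (σ * b + A * ξ)) :
    0 < ξ ∧
    (-σ * x₁ + σ * y₁ - A * y₁ * z₁ = 0 ∧
      r * x₁ - y₁ - x₁ * z₁ = 0 ∧ -b * z₁ + x₁ * y₁ = 0) ∧
    (-σ * (-x₁) + σ * (-y₁) - A * (-y₁) * z₁ = 0 ∧
      r * (-x₁) - (-y₁) - (-x₁) * z₁ = 0 ∧ -b * z₁ + (-x₁) * (-y₁) = 0) := by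
  have hgap : 0 < 4 * A ^ 2 * (r - 1) := by
    have := sub_pos.2 hr
    positivity
  rw [show (A * r - σ) ^ 2 + 4 * A * σ = (A * (r - 2) - σ) ^ 2 + 4 * A ^ 2 * (r - 1) by ring]
    at hξ
  have hξpos : 0 < ξ := hξ ▸ mul_pos (by positivity) (add_sqrt_sq_add_pos _ hgap)
  have hquad := sq_mul_sq_eq_of_eq_quadratic_root hA.ne' (by positivity) hξ
  have hD : σ * b + A * ξ ≠ 0 := by positivity
  have hy₁sq : y₁ ^ 2 = ξ := hy₁ ▸ Real.sq_sqrt hξpos.le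
  refine ⟨hξpos, lorenz_equilibrium_of_sq_eq hD hquad hy₁sq (hy₁ ▸ hx₁) hz₁,
    lorenz_equilibrium_of_sq_eq hD hquad (by rwa [neg_sq]) ?_ hz₁⟩
  rw [hx₁, hy₁]
  ring
end

section
/- Let σ > 0, A > 0, b > 0, r > 1. The system 0 < γ₂ ≤ (σ+Ar)/(2(r−1)b), max{1/(2b) − γ₂/A, Γ₋(γ₂)} ≤ γ₁ ≤ Γ₊(γ₂) has a solution (γ₁, γ₂) ∈ ℝ². -/
/-! At the largest admissible value `γ₂ = (σ + A r) / (2 (r - 1) b)` the radicand of `Γ±` vanishes,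
so `Γ₋(γ₂) = Γ₊(γ₂) = (σ + A r) / (2 b (r - 1) σ) > 0`, whereas the line `1/(2b) - γ₂/A` is negative
there because `σ + A > 0`. Hence `γ₁ := Γ±(γ₂)` solves the system. -/

section

variable {b r S : ℝ}

lemma radicand_eq_zero_at_max (hb : b ≠ 0) (hr : r ≠ 1) :
    2 * (S / (2 * (r - 1) * b)) * (2 * (1 - r) * (S / (2 * (r - 1) * b)) + S / b) = 0 := by
  have hr' : r - 1 ≠ 0 := sub_ne_zero.mpr hr
  field_simp
  ring

lemma centre_eq_at_max {σ : ℝ} (hσ : σ ≠ 0) (hb : b ≠ 0) (hr : r ≠ 1) :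
    1 / σ * (S / (2 * (r - 1) * b) * (2 - r) + S / (2 * b)) = S / (2 * b * (r - 1) * σ) := by
  have hr' : r - 1 ≠ 0 := sub_ne_zero.mpr hr
  field_simp
  ring

lemma line_neg_at_max {A : ℝ} (hA : 0 < A) (hb : 0 < b) (hr : 1 < r) (hS : A * (r - 1) < S) :
    1 / (2 * b) - S / (2 * (r - 1) * b) / A < 0 := by
  have hr' : 0 < r - 1 := sub_pos.mpr hr
  rw [sub_neg, div_div, div_lt_div_iff₀ (by positivity) (by positivity)]
  nlinarith [mul_pos hb hr']

end

/-- Solvability of the system of inequalities for (γ₁, γ₂). -/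
theorem gamma_system_solvable
    (σ A b r : ℝ) (hσ : 0 < σ) (hA : 0 < A) (hb : 0 < b) (hr : 1 < r) :
    ∃ γ₁ γ₂ : ℝ,
      0 < γ₂ ∧ γ₂ ≤ (σ + A * r) / (2 * (r - 1) * b) ∧
      max (1 / (2 * b) - γ₂ / A)
          ((1 / σ) * (γ₂ * (2 - r) + (σ + A * r) / (2 * b) -
            Real.sqrt (2 * γ₂ * (2 * (1 - r) * γ₂ + (σ + A * r) / b)))) ≤ γ₁ ∧
      γ₁ ≤ (1 / σ) * (γ₂ * (2 - r) + (σ + A * r) / (2 * b) +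
        Real.sqrt (2 * γ₂ * (2 * (1 - r) * γ₂ + (σ + A * r) / b))) := by
  have hr' : 0 < r - 1 := sub_pos.mpr hr
  have hcentre := centre_eq_at_max (S := σ + A * r) hσ.ne' hb.ne' hr.ne'
  have hcentre_pos : 0 < (σ + A * r) / (2 * b * (r - 1) * σ) := by positivity
  have hline := line_neg_at_max (S := σ + A * r) hA hb hr (by linarith)
  refine ⟨(σ + A * r) / (2 * b * (r - 1) * σ), (σ + A * r) / (2 * (r - 1) * b),
    by positivity, le_rfl, ?_, ?_⟩
  all_goals simp only [radicand_eq_zero_at_max hb.ne' hr.ne', Real.sqrt_zero, sub_zero, add_zero,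
    hcentre]
  · exact max_le (by linarith) le_rfl
  · exact le_rfl
end
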